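/- arXiv:2305.14183 — 4 statements merged into one kernel-verified Lean document; each statement's English description precedes it below -/
import Mathlib

section
/- Let d ≥ 1, p ≥ 1, let Ω ⊂ ℝ^d be a nonempty open proper subset and f : Ω → ℝ measurable. Suppose that for some −∞ ≤ α₁ < α₂ ≤ ∞, −∞ ≤ β₁ < β₂ ≤ ∞ and 0 ≤ s₁ < s₂ ≤ 1, the double integral I(s, α, β) = ∫_Ω ∫_Ω |f(x) − f(y)|^p |x−y|^{−d−sp} d_Ω(x)^{−α} d_Ω(y)^{−β} dy dx is finite for all s ∈ (s₁, s₂), α ∈ (α₁, α₂), β ∈ (β₁, β₂). Then the function (s, α, β) ↦ I(s, α, β) is continuous on (s₁, s₂) × (α₁, α₂) × (β₁, β₂). -/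
/-!
Dominated convergence in the parameter. For fixed `t > 0` the map `c ↦ t ^ c` is monotone or
antitone, so on a box `[s, s'] × [a, a'] × [b, b']` around `(s₀, α₀, β₀)` the integrand is bounded
pointwise by its value at one of the eight corners of the box, hence by the sum of its values at the
corners, whose integral is finite when the box lies in the parameter region. Off the diagonal and
inside `Ω × Ω`, where `d_Ω > 0`, the integrand is continuous in the parameters.
-/

open MeasureTheory Metric Set Filter Topology
open scoped ENNReal

theorem Metric.infDist_frontier_pos {X : Type*} [MetricSpace X] [PreconnectedSpace X]
    {Ω : Set X} (hΩo : IsOpen Ω) (hΩu : Ω ≠ univ) {x : X} (hx : x ∈ Ω) :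
    0 < infDist x (frontier Ω) := by
  have hfr : (frontier Ω).Nonempty := by
    rw [nonempty_iff_ne_empty]
    intro he
    rcases isClopen_iff.1 (isClopen_iff_frontier_eq_empty.2 he) with h | h
    · exact (h ▸ hx : x ∈ (∅ : Set X))
    · exact hΩu h
  exact (isClosed_frontier.notMem_iff_infDist_pos hfr).1 fun hxf =>
    (disjoint_frontier_iff_isOpen.2 hΩo).le_bot ⟨hxf, hx⟩

namespace Real

variable {t a b c : ℝ}

theorem rpow_le_or_rpow_le_of_mem_uIcc (ht : 0 < t) (hc : c ∈ uIcc a b) :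
    t ^ c ≤ t ^ a ∨ t ^ c ≤ t ^ b := by
  rcases le_total 1 t with h1 | h1
  · have h := rpow_le_rpow_of_exponent_le h1 hc.2
    rcases max_choice a b with h' | h' <;> rw [h'] at h <;> simp [h]
  · have h := rpow_le_rpow_of_exponent_ge ht h1 hc.1
    rcases min_choice a b with h' | h' <;> rw [h'] at h <;> simp [h]

theorem le_rpow_or_le_rpow_of_mem_uIcc (ht : 0 < t) (hc : c ∈ uIcc a b) :
    t ^ a ≤ t ^ c ∨ t ^ b ≤ t ^ c := by
  rcases le_total 1 t with h1 | h1
  · have h := rpow_le_rpow_of_exponent_le h1 hc.1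
    rcases min_choice a b with h' | h' <;> rw [h'] at h <;> simp [h]
  · have h := rpow_le_rpow_of_exponent_ge ht h1 hc.2
    rcases max_choice a b with h' | h' <;> rw [h'] at h <;> simp [h]

end Real

theorem continuousAt_lintegral_of_le_finsetSum {P α : Type*} [TopologicalSpace P]
    [FirstCountableTopology P] [MeasurableSpace α] {μ : Measure α} {F : P → α → ℝ≥0∞}
    {q₀ : P} (C : Finset P) (hF : ∀ q, Measurable (F q))
    (hle : ∀ᶠ q in 𝓝 q₀, ∀ᵐ z ∂μ, F q z ≤ ∑ c ∈ C, F c z)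
    (hC : ∀ c ∈ C, ∫⁻ z, F c z ∂μ ≠ ∞)
    (hcont : ∀ᵐ z ∂μ, ContinuousAt (fun q => F q z) q₀) :
    ContinuousAt (fun q => ∫⁻ z, F q z ∂μ) q₀ := by
  refine tendsto_lintegral_filter_of_dominated_convergence _ (.of_forall hF) hle ?_ hcont
  rw [lintegral_finsetSum _ fun c _ => hF c]
  exact ENNReal.sum_ne_top.2 hC

theorem ae_prod_restrict_mem_mem_ne {X : Type*} [MeasurableSpace X] [MeasurableEq X]
    (μ : Measure X) [SFinite μ] [NullSingletonClass μ] {Ω : Set X} (hΩ : MeasurableSet Ω) :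
    ∀ᵐ z ∂(μ.restrict Ω).prod (μ.restrict Ω), z.1 ∈ Ω ∧ z.2 ∈ Ω ∧ z.1 ≠ z.2 := by
  have hm : MeasurableSet {z : X × X | z.1 ∈ Ω ∧ z.2 ∈ Ω ∧ z.1 ≠ z.2} :=
    (hΩ.preimage measurable_fst).inter
      ((hΩ.preimage measurable_snd).inter measurableSet_diagonal.compl)
  rw [Measure.ae_prod_iff_ae_ae hm]
  filter_upwards [ae_restrict_mem hΩ] with x hx
  filter_upwards [ae_restrict_mem hΩ, (μ.restrict Ω).ae_ne x] with y hy hne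
  exact ⟨hx, hy, hne.symm⟩

theorem exists_uIcc_prod_mem_nhds_subset {S : Set (ℝ × ℝ × ℝ)} {q : ℝ × ℝ × ℝ}
    (hS : S ∈ 𝓝 q) : ∃ s s' a a' b b' : ℝ,
      uIcc s s' ×ˢ uIcc a a' ×ˢ uIcc b b' ∈ 𝓝 q ∧ uIcc s s' ×ˢ uIcc a a' ×ˢ uIcc b b' ⊆ S := by
  obtain ⟨U, hU, VW, hVW, hUVW⟩ := mem_nhds_prod_iff.1 hS
  obtain ⟨V, hV, W, hW, hVW'⟩ := mem_nhds_prod_iff.1 hVW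
  obtain ⟨s, s', hs, hsn, hsU⟩ := exists_Icc_mem_subset_of_mem_nhds hU
  obtain ⟨a, a', ha, han, haV⟩ := exists_Icc_mem_subset_of_mem_nhds hV
  obtain ⟨b, b', hb, hbn, hbW⟩ := exists_Icc_mem_subset_of_mem_nhds hW
  refine ⟨s, s', a, a', b, b', ?_, ?_⟩ <;>
    rw [uIcc_of_le (hs.1.trans hs.2), uIcc_of_le (ha.1.trans ha.2), uIcc_of_le (hb.1.trans hb.2)]
  · exact prod_mem_nhds hsn (prod_mem_nhds han hbn)
  · exact (prod_mono hsU (prod_mono haV hbW)).trans ((prod_mono le_rfl hVW').trans hUVW)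

theorem mem_uIcc_prod_of_mem_corners {s s' a a' b b' : ℝ} {c : ℝ × ℝ × ℝ}
    (hc : c ∈ ({s, s'} ×ˢ {a, a'} ×ˢ {b, b'} : Finset (ℝ × ℝ × ℝ))) :
    c ∈ uIcc s s' ×ˢ uIcc a a' ×ˢ uIcc b b' := by
  simp only [Finset.mem_product, Finset.mem_insert, Finset.mem_singleton] at hc
  obtain ⟨h₁ | h₁, h₂ | h₂, h₃ | h₃⟩ := hc <;>
    exact ⟨by simp [h₁], by simp [h₂], by simp [h₃]⟩

section Kernel

variable {E : Type*} [NormedAddCommGroup E]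

/-- `q = (s, α, β)`; `n` plays the role of the dimension `d`. -/
noncomputable def weightedGagliardoKernel (n p : ℝ) (Ω : Set E) (f : E → ℝ) (q : ℝ × ℝ × ℝ)
    (z : E × E) : ℝ≥0∞ :=
  ENNReal.ofReal (|f z.1 - f z.2| ^ p / ‖z.1 - z.2‖ ^ (n + q.1 * p)
    * infDist z.1 (frontier Ω) ^ (-q.2.1) * infDist z.2 (frontier Ω) ^ (-q.2.2))

variable {n p : ℝ} {Ω : Set E} {f : E → ℝ}

theorem measurable_weightedGagliardoKernel [MeasurableSpace E] [BorelSpace E]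
    [SecondCountableTopology E] (hf : Measurable f) (q : ℝ × ℝ × ℝ) :
    Measurable (weightedGagliardoKernel n p Ω f q) := by
  unfold weightedGagliardoKernel
  fun_prop

theorem continuous_weightedGagliardoKernel {z : E × E} (hz : z.1 ≠ z.2)
    (hz₁ : 0 < infDist z.1 (frontier Ω)) (hz₂ : 0 < infDist z.2 (frontier Ω)) :
    Continuous fun q => weightedGagliardoKernel n p Ω f q z := by
  have hr : 0 < ‖z.1 - z.2‖ := norm_pos_iff.2 (sub_ne_zero.2 hz)
  exact ENNReal.continuous_ofReal.comp (by fun_prop (disch := intros; positivity))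

theorem weightedGagliardoKernel_le_sum_corners {s s' a a' b b' : ℝ} {q : ℝ × ℝ × ℝ}
    (hq : q ∈ uIcc s s' ×ˢ uIcc a a' ×ˢ uIcc b b') {z : E × E} (hz : z.1 ≠ z.2)
    (hz₁ : 0 < infDist z.1 (frontier Ω)) (hz₂ : 0 < infDist z.2 (frontier Ω)) :
    weightedGagliardoKernel n p Ω f q z ≤
      ∑ c ∈ {s, s'} ×ˢ {a, a'} ×ˢ {b, b'}, weightedGagliardoKernel n p Ω f c z := by
  obtain ⟨hqs, hqa, hqb⟩ := hq
  have hr : 0 < ‖z.1 - z.2‖ := norm_pos_iff.2 (sub_ne_zero.2 hz)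
  have hexp : n + q.1 * p ∈ uIcc (n + s * p) (n + s' * p) := by
    rw [← image_const_add_uIcc, ← image_mul_const_uIcc]
    exact mem_image_of_mem _ (mem_image_of_mem _ hqs)
  have hneg {c e e' : ℝ} (h : c ∈ uIcc e e') : -c ∈ uIcc (-e) (-e') := by
    rw [← image_neg_uIcc]
    exact mem_image_of_mem _ h
  obtain ⟨e₁, he₁, h₁⟩ : ∃ e ∈ ({s, s'} : Finset ℝ),
      ‖z.1 - z.2‖ ^ (n + e * p) ≤ ‖z.1 - z.2‖ ^ (n + q.1 * p) := by
    rcases Real.le_rpow_or_le_rpow_of_mem_uIcc hr hexp with h | h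
    exacts [⟨s, by simp, h⟩, ⟨s', by simp, h⟩]
  obtain ⟨e₂, he₂, h₂⟩ : ∃ e ∈ ({a, a'} : Finset ℝ),
      infDist z.1 (frontier Ω) ^ (-q.2.1) ≤ infDist z.1 (frontier Ω) ^ (-e) := by
    rcases Real.rpow_le_or_rpow_le_of_mem_uIcc hz₁ (hneg hqa) with h | h
    exacts [⟨a, by simp, h⟩, ⟨a', by simp, h⟩]
  obtain ⟨e₃, he₃, h₃⟩ : ∃ e ∈ ({b, b'} : Finset ℝ),
      infDist z.2 (frontier Ω) ^ (-q.2.2) ≤ infDist z.2 (frontier Ω) ^ (-e) := by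
    rcases Real.rpow_le_or_rpow_le_of_mem_uIcc hz₂ (hneg hqb) with h | h
    exacts [⟨b, by simp, h⟩, ⟨b', by simp, h⟩]
  calc weightedGagliardoKernel n p Ω f q z ≤ weightedGagliardoKernel n p Ω f (e₁, e₂, e₃) z := by
        unfold weightedGagliardoKernel
        gcongr
    _ ≤ _ := Finset.single_le_sum (f := fun c => weightedGagliardoKernel n p Ω f c z)
        (fun _ _ => zero_le) (Finset.mem_product.2 ⟨he₁, Finset.mem_product.2 ⟨he₂, he₃⟩⟩)

theorem continuousAt_lintegral_weightedGagliardoKernel [NormedSpace ℝ E] [MeasurableSpace E]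
    [BorelSpace E] [SecondCountableTopology E] (μ : Measure E) [SFinite μ] [NullSingletonClass μ]
    (hΩo : IsOpen Ω) (hΩu : Ω ≠ univ) (hf : Measurable f) {q₀ : ℝ × ℝ × ℝ}
    {s s' a a' b b' : ℝ} (hbox : uIcc s s' ×ˢ uIcc a a' ×ˢ uIcc b b' ∈ 𝓝 q₀)
    (hfin : ∀ c ∈ ({s, s'} ×ˢ {a, a'} ×ˢ {b, b'} : Finset (ℝ × ℝ × ℝ)),
      ∫⁻ z, weightedGagliardoKernel n p Ω f c z ∂(μ.restrict Ω).prod (μ.restrict Ω) ≠ ∞) :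
    ContinuousAt (fun q => ∫⁻ z, weightedGagliardoKernel n p Ω f q z
      ∂(μ.restrict Ω).prod (μ.restrict Ω)) q₀ := by
  have hae := ae_prod_restrict_mem_mem_ne μ hΩo.measurableSet
  refine continuousAt_lintegral_of_le_finsetSum _ (measurable_weightedGagliardoKernel hf) ?_
    hfin ?_
  · filter_upwards [hbox] with q hq
    filter_upwards [hae] with z ⟨hz₁, hz₂, hz⟩
    exact weightedGagliardoKernel_le_sum_corners hq hz (infDist_frontier_pos hΩo hΩu hz₁)
      (infDist_frontier_pos hΩo hΩu hz₂)
  · filter_upwards [hae] with z ⟨hz₁, hz₂, hz⟩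
    exact (continuous_weightedGagliardoKernel hz (infDist_frontier_pos hΩo hΩu hz₁)
      (infDist_frontier_pos hΩo hΩu hz₂)).continuousAt

end Kernel

theorem gagliardo_seminorm_continuous_general
    (d : ℕ) (hd : 1 ≤ d) (p : ℝ)
    (Ω : Set (EuclideanSpace ℝ (Fin d))) (hΩo : IsOpen Ω)
    (hΩp : Ω ≠ Set.univ)
    (f : EuclideanSpace ℝ (Fin d) → ℝ) (hf : Measurable f)
    (s₁ s₂ : ℝ)
    (α₁ α₂ β₁ β₂ : EReal)
    (I : ℝ → ℝ → ℝ → ENNReal)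
    (hI : ∀ s α β : ℝ, I s α β =
      ∫⁻ x in Ω, ∫⁻ y in Ω, ENNReal.ofReal
        (|f x - f y| ^ p / ‖x - y‖ ^ ((d : ℝ) + s * p)
          * (infDist x (frontier Ω)) ^ (-α) * (infDist y (frontier Ω)) ^ (-β)))
    (hfin : ∀ s α β : ℝ, s ∈ Set.Ioo s₁ s₂ →
      α₁ < (α : EReal) → (α : EReal) < α₂ → β₁ < (β : EReal) → (β : EReal) < β₂ →
      I s α β ≠ ⊤) :
    ContinuousOn (fun q : ℝ × ℝ × ℝ => (I q.1 q.2.1 q.2.2).toReal)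
      {q : ℝ × ℝ × ℝ | q.1 ∈ Set.Ioo s₁ s₂ ∧
        α₁ < (q.2.1 : EReal) ∧ (q.2.1 : EReal) < α₂ ∧
        β₁ < (q.2.2 : EReal) ∧ (q.2.2 : EReal) < β₂} := by
  -- gives `NullSingletonClass volume`, so the diagonal of `Ω × Ω` is null
  have : Nonempty (Fin d) := ⟨⟨0, hd⟩⟩
  set R := {q : ℝ × ℝ × ℝ | q.1 ∈ Set.Ioo s₁ s₂ ∧
    α₁ < (q.2.1 : EReal) ∧ (q.2.1 : EReal) < α₂ ∧ β₁ < (q.2.2 : EReal) ∧ (q.2.2 : EReal) < β₂}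
  have hRo : IsOpen R := by
    have hR : R = Ioo s₁ s₂ ×ˢ (((↑) ⁻¹' Ioo α₁ α₂) ×ˢ ((↑) ⁻¹' Ioo β₁ β₂)) := by
      ext; simp [R, and_assoc]
    rw [hR]
    exact isOpen_Ioo.prod ((isOpen_Ioo.preimage continuous_coe_real_ereal).prod
      (isOpen_Ioo.preimage continuous_coe_real_ereal))
  have hIK (q : ℝ × ℝ × ℝ) : I q.1 q.2.1 q.2.2 = ∫⁻ z, weightedGagliardoKernel d p Ω f q z
      ∂(volume.restrict Ω).prod (volume.restrict Ω) := by
    rw [hI, lintegral_prod _ (measurable_weightedGagliardoKernel hf q).aemeasurable]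
    rfl
  have hfinR (q : ℝ × ℝ × ℝ) (hq : q ∈ R) : I q.1 q.2.1 q.2.2 ≠ ⊤ :=
    hfin _ _ _ hq.1 hq.2.1 hq.2.2.1 hq.2.2.2.1 hq.2.2.2.2
  intro q₀ hq₀
  obtain ⟨s, s', a, a', b, b', hbox, hboxR⟩ := exists_uIcc_prod_mem_nhds_subset (hRo.mem_nhds hq₀)
  have hcont := continuousAt_lintegral_weightedGagliardoKernel volume hΩo hΩp hf hbox
    fun c hc => hIK c ▸ hfinR c (hboxR (mem_uIcc_prod_of_mem_corners hc))
  simp only [hIK]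
  exact ((ENNReal.continuousAt_toReal (hIK q₀ ▸ hfinR q₀ hq₀)).comp hcont).continuousWithinAt

/-- Continuity of weighted Gagliardo seminorms in the parameters `(s, α, β)`. -/
theorem gagliardo_seminorm_continuous
    (d : ℕ) (hd : 1 ≤ d) (p : ℝ) (hp : 1 ≤ p)
    (Ω : Set (EuclideanSpace ℝ (Fin d))) (hΩo : IsOpen Ω) (hΩne : Ω.Nonempty)
    (hΩp : Ω ≠ Set.univ)
    (f : EuclideanSpace ℝ (Fin d) → ℝ) (hf : Measurable f)
    (s₁ s₂ : ℝ) (hs₁ : 0 ≤ s₁) (hs : s₁ < s₂) (hs₂ : s₂ ≤ 1)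
    (α₁ α₂ β₁ β₂ : EReal) (hα : α₁ < α₂) (hβ : β₁ < β₂)
    (I : ℝ → ℝ → ℝ → ENNReal)
    (hI : ∀ s α β : ℝ, I s α β =
      ∫⁻ x in Ω, ∫⁻ y in Ω, ENNReal.ofReal
        (|f x - f y| ^ p / ‖x - y‖ ^ ((d : ℝ) + s * p)
          * (infDist x (frontier Ω)) ^ (-α) * (infDist y (frontier Ω)) ^ (-β)))
    (hfin : ∀ s α β : ℝ, s ∈ Set.Ioo s₁ s₂ →
      α₁ < (α : EReal) → (α : EReal) < α₂ → β₁ < (β : EReal) → (β : EReal) < β₂ →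
      I s α β ≠ ⊤) :
    ContinuousOn (fun q : ℝ × ℝ × ℝ => (I q.1 q.2.1 q.2.2).toReal)
      {q : ℝ × ℝ × ℝ | q.1 ∈ Set.Ioo s₁ s₂ ∧
        α₁ < (q.2.1 : EReal) ∧ (q.2.1 : EReal) < α₂ ∧
        β₁ < (q.2.2 : EReal) ∧ (q.2.2 : EReal) < β₂} :=
  gagliardo_seminorm_continuous_general d hd p Ω hΩo hΩp f hf s₁ s₂ α₁ α₂ β₁ β₂ I hI hfin
end

section
/- Let d ≥ 1 and p ≥ 1 be real. Then lim_{α→0⁺} α ∫_0^1 r^{α−1} (1 − r^{(d−2α)/p})^p / (1 − r²) dr = 1. Equivalently, the sharp constant C(d,p,α) = 2|S^{d−1}| ∫_0^1 r^{α−1}(1 − r^{(d−2α)/p})^p/(1−r²) dr in the weighted fractional Hardy inequality satisfies lim_{α→0⁺} α C(d,p,α) = 2|S^{d−1}|. -/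
open MeasureTheory Metric Set Filter

-- pointwise upper bound on all of (0,1)
lemma hca_ptw_upper {p c M r : ℝ} (hp : 1 ≤ p) (hc : 0 < c) (hM1 : 1 ≤ M) (hcM : c ≤ M)
    (hr0 : 0 < r) (hr1 : r < 1) : (1 - r ^ c) ^ p / (1 - r ^ 2) ≤ M ^ p := by
  have hrc1 : r ^ c ≤ 1 := Real.rpow_le_one hr0.le hr1.le hc.le
  have h1 : (0:ℝ) ≤ 1 - r ^ c := by linarith
  have hM0 : (0:ℝ) ≤ M := by linarith
  have h2 : 1 - r ^ c ≤ M * (1 - r) := by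
    rcases le_total c 1 with hc1 | hc1
    · have : r ^ (1:ℝ) ≤ r ^ c := Real.rpow_le_rpow_of_exponent_ge hr0 hr1.le hc1
      rw [Real.rpow_one] at this
      nlinarith
    · have hb : 1 + c * (r - 1) ≤ (1 + (r - 1)) ^ c :=
        one_add_mul_self_le_rpow_one_add (by linarith) hc1
      have : 1 + c * (r - 1) ≤ r ^ c := by
        simpa using hb
      nlinarith
  have h3 : (1 - r ^ c) ^ p ≤ (M * (1 - r)) ^ p :=
    Real.rpow_le_rpow h1 h2 (by linarith)
  have h4 : (M * (1 - r)) ^ p = M ^ p * (1 - r) ^ p :=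
    Real.mul_rpow hM0 (by linarith)
  have h5 : (1 - r) ^ p ≤ (1 - r) ^ (1:ℝ) :=
    Real.rpow_le_rpow_of_exponent_ge (by linarith) (by linarith) hp
  rw [Real.rpow_one] at h5
  have h6 : (0:ℝ) < 1 - r ^ 2 := by nlinarith
  rw [div_le_iff₀ h6]
  have hMp : (0:ℝ) ≤ M ^ p := Real.rpow_nonneg hM0 p
  have h7 : (1 - r) ≤ 1 - r ^ 2 := by nlinarith
  calc (1 - r ^ c) ^ p ≤ M ^ p * (1 - r) ^ p := by rw [← h4]; exact h3
    _ ≤ M ^ p * (1 - r) := by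
        exact mul_le_mul_of_nonneg_left h5 hMp
    _ ≤ M ^ p * (1 - r ^ 2) := mul_le_mul_of_nonneg_left h7 hMp

lemma hca_ptw_lower_piece {p c cm δ r : ℝ} (hp : 0 ≤ p) (hcm : 0 < cm) (hcmc : cm ≤ c)
    (hδ0 : 0 < δ) (hδ1 : δ < 1) (hr : r ∈ Set.Ioc 0 δ) :
    (1 - δ ^ cm) ^ p ≤ (1 - r ^ c) ^ p / (1 - r ^ 2) := by
  obtain ⟨hr0, hrδ⟩ := hr
  have hr1 : r < 1 := lt_of_le_of_lt hrδ hδ1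
  have h1 : r ^ c ≤ δ ^ c := Real.rpow_le_rpow hr0.le hrδ (by linarith)
  have h2 : δ ^ c ≤ δ ^ cm := Real.rpow_le_rpow_of_exponent_ge hδ0 hδ1.le hcmc
  have hδcm1 : δ ^ cm ≤ 1 := Real.rpow_le_one hδ0.le hδ1.le hcm.le
  have h3 : (1 - δ ^ cm) ^ p ≤ (1 - r ^ c) ^ p :=
    Real.rpow_le_rpow (by linarith) (by linarith) hp
  have h6 : (0:ℝ) < 1 - r ^ 2 := by nlinarith
  rw [le_div_iff₀ h6]
  calc (1 - δ ^ cm) ^ p * (1 - r ^ 2) ≤ (1 - δ ^ cm) ^ p * 1 := by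
        apply mul_le_mul_of_nonneg_left (by nlinarith) (Real.rpow_nonneg (by linarith) p)
    _ = (1 - δ ^ cm) ^ p := mul_one _
    _ ≤ (1 - r ^ c) ^ p := h3

lemma hca_ptw_upper_piece {p c δ r : ℝ} (hp : 0 ≤ p) (hc : 0 ≤ c) (hδ1 : δ < 1)
    (hr : r ∈ Set.Ioc 0 δ) :
    (1 - r ^ c) ^ p / (1 - r ^ 2) ≤ (1 - δ ^ 2)⁻¹ := by
  obtain ⟨hr0, hrδ⟩ := hr
  have hr1 : r < 1 := lt_of_le_of_lt hrδ hδ1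
  have hrc1 : r ^ c ≤ 1 := Real.rpow_le_one hr0.le hr1.le hc
  have hrc0 : (0:ℝ) ≤ r ^ c := Real.rpow_nonneg hr0.le c
  have hnum : (1 - r ^ c) ^ p ≤ 1 := Real.rpow_le_one (by linarith) (by linarith) hp
  have hδ2 : (0:ℝ) < 1 - δ ^ 2 := by nlinarith
  have hden : 1 - δ ^ 2 ≤ 1 - r ^ 2 := by nlinarith
  rw [← one_div]
  exact div_le_div₀ (by norm_num) hnum hδ2 hden

lemma hca_int_rpow {α : ℝ} (hα : 0 < α) :
    IntegrableOn (fun r : ℝ => r ^ (α - 1)) (Set.Ioc 0 1) := by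
  have h := intervalIntegral.intervalIntegrable_rpow' (a := 0) (b := 1)
    (show (-1:ℝ) < α - 1 by linarith)
  rw [intervalIntegrable_iff, uIoc_of_le (by norm_num : (0:ℝ) ≤ 1)] at h
  exact h

lemma hca_eval_Ioc {α δ : ℝ} (hα : 0 < α) (hδ : 0 < δ) :
    ∫ r in Set.Ioc (0:ℝ) δ, r ^ (α - 1) = δ ^ α / α := by
  rw [← intervalIntegral.integral_of_le hδ.le,
    integral_rpow (Or.inl (by linarith : (-1:ℝ) < α - 1))]
  rw [sub_add_cancel, Real.zero_rpow hα.ne', sub_zero]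

lemma hca_eval_Ioo {α δ : ℝ} (hα : 0 < α) (hδ0 : 0 < δ) (hδ1 : δ ≤ 1) :
    ∫ r in Set.Ioo δ (1:ℝ), r ^ (α - 1) = (1 - δ ^ α) / α := by
  rw [← integral_Ioc_eq_integral_Ioo, ← intervalIntegral.integral_of_le hδ1,
    integral_rpow (Or.inl (by linarith : (-1:ℝ) < α - 1))]
  rw [sub_add_cancel, Real.one_rpow]

lemma hca_contOn {α c p : ℝ} (hp : 0 ≤ p) :
    ContinuousOn (fun r : ℝ => r ^ (α - 1) * (1 - r ^ c) ^ p / (1 - r ^ 2))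
      (Set.Ioo (0:ℝ) 1) := by
  apply ContinuousOn.div
  · apply ContinuousOn.mul
    · exact fun x hx => (Real.continuousAt_rpow_const x (α-1) (Or.inl hx.1.ne')).continuousWithinAt
    · apply ContinuousOn.rpow_const
      · exact continuousOn_const.sub (fun x hx =>
          (Real.continuousAt_rpow_const x c (Or.inl hx.1.ne')).continuousWithinAt)
      · exact fun x _ => Or.inr hp
  · fun_prop
  · intro x hx
    have : x ^ 2 < 1 := by nlinarith [hx.1, hx.2]
    intro h; nlinarith [hx.1, hx.2]

lemma hca_nonneg {α c p r : ℝ} (hp : 0 ≤ p) (hc : 0 ≤ c) (hr0 : 0 < r) (hr1 : r < 1) :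
    0 ≤ r ^ (α - 1) * (1 - r ^ c) ^ p / (1 - r ^ 2) := by
  have h1 : r ^ c ≤ 1 := Real.rpow_le_one hr0.le hr1.le hc
  have h2 : (0:ℝ) < 1 - r ^ 2 := by nlinarith
  have h3 : (0:ℝ) ≤ (1 - r ^ c) ^ p := Real.rpow_nonneg (by linarith) p
  positivity

lemma hca_integrableOn {α c p M : ℝ} (hα : 0 < α) (hp : 1 ≤ p) (hc : 0 < c)
    (hM1 : 1 ≤ M) (hcM : c ≤ M) :
    IntegrableOn (fun r : ℝ => r ^ (α - 1) * (1 - r ^ c) ^ p / (1 - r ^ 2))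
      (Set.Ioo (0:ℝ) 1) := by
  have hmeas := (hca_contOn (α := α) (c := c) (p := p)
    (by linarith)).aestronglyMeasurable (μ := volume) measurableSet_Ioo
  have hg : IntegrableOn (fun r : ℝ => M ^ p * r ^ (α - 1)) (Set.Ioo (0:ℝ) 1) :=
    ((hca_int_rpow hα).mono_set Set.Ioo_subset_Ioc_self).const_mul _
  apply Integrable.mono' hg hmeas
  rw [ae_restrict_iff' measurableSet_Ioo]
  filter_upwards with r hr
  have h0 := hca_nonneg (α := α) (by linarith : (0:ℝ) ≤ p) hc.le hr.1 hr.2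
  rw [Real.norm_of_nonneg h0, mul_div_assoc]
  calc r ^ (α - 1) * ((1 - r ^ c) ^ p / (1 - r ^ 2))
      ≤ r ^ (α - 1) * M ^ p := mul_le_mul_of_nonneg_left
        (hca_ptw_upper hp hc hM1 hcM hr.1 hr.2) (Real.rpow_nonneg hr.1.le _)
    _ = M ^ p * r ^ (α - 1) := mul_comm _ _

lemma hca_bounds {d p α δ : ℝ} (hd : 1 ≤ d) (hp : 1 ≤ p) (hδ0 : 0 < δ) (hδ1 : δ < 1)
    (hα0 : 0 < α) (hα1 : α < d / 4) :
    (1 - δ ^ (d / (2 * p))) ^ p * δ ^ α ≤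
      α * ∫ r in Set.Ioo (0:ℝ) 1, r ^ (α - 1) * (1 - r ^ ((d - 2 * α) / p)) ^ p / (1 - r ^ 2)
    ∧ α * ∫ r in Set.Ioo (0:ℝ) 1, r ^ (α - 1) * (1 - r ^ ((d - 2 * α) / p)) ^ p / (1 - r ^ 2)
        ≤ (1 - δ ^ 2)⁻¹ * δ ^ α + (max 1 (d / p)) ^ p * (1 - δ ^ α) := by
  have hp0 : (0:ℝ) < p := by linarith
  set c : ℝ := (d - 2 * α) / p with hc_def
  set cm : ℝ := d / (2 * p) with hcm_def
  set M : ℝ := max 1 (d / p) with hM_def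
  have hc : 0 < c := div_pos (by linarith) hp0
  have hcm : 0 < cm := div_pos (by linarith) (by linarith)
  have hcmc : cm ≤ c := by
    rw [hcm_def, hc_def, ← div_div]
    gcongr
    linarith
  have hM1 : (1:ℝ) ≤ M := le_max_left _ _
  have hcM : c ≤ M := by
    refine le_trans ?_ (le_max_right 1 (d / p))
    rw [hc_def]
    gcongr
    linarith
  set h : ℝ → ℝ := fun r => r ^ (α - 1) * (1 - r ^ c) ^ p / (1 - r ^ 2) with hh_def
  have hInt : IntegrableOn h (Set.Ioo (0:ℝ) 1) := hca_integrableOn hα0 hp hc hM1 hcM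
  have hsubA : Set.Ioc (0:ℝ) δ ⊆ Set.Ioo (0:ℝ) 1 :=
    fun x hx => ⟨hx.1, lt_of_le_of_lt hx.2 hδ1⟩
  have hsubB : Set.Ioo δ (1:ℝ) ⊆ Set.Ioo (0:ℝ) 1 :=
    fun x hx => ⟨lt_trans hδ0 hx.1, hx.2⟩
  have hIntA : IntegrableOn h (Set.Ioc (0:ℝ) δ) := hInt.mono_set hsubA
  have hIntB : IntegrableOn h (Set.Ioo δ (1:ℝ)) := hInt.mono_set hsubB
  have hdisj : Disjoint (Set.Ioc (0:ℝ) δ) (Set.Ioo δ (1:ℝ)) := by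
    rw [Set.disjoint_left]
    rintro x ⟨_, h1⟩ ⟨h2, _⟩
    exact absurd h1 (not_le.mpr h2)
  have hsplit : ∫ r in Set.Ioo (0:ℝ) 1, h r
      = (∫ r in Set.Ioc (0:ℝ) δ, h r) + ∫ r in Set.Ioo δ (1:ℝ), h r := by
    rw [← Set.Ioc_union_Ioo_eq_Ioo hδ0.le hδ1]
    exact setIntegral_union hdisj measurableSet_Ioo hIntA hIntB
  -- bounds for A
  have hrpow_nonneg : ∀ r : ℝ, 0 < r → (0:ℝ) ≤ r ^ (α - 1) :=
    fun r hr => Real.rpow_nonneg hr.le _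
  have hA_lower : (1 - δ ^ cm) ^ p * (δ ^ α / α) ≤ ∫ r in Set.Ioc (0:ℝ) δ, h r := by
    have hmono := setIntegral_mono_on
      (f := fun r : ℝ => (1 - δ ^ cm) ^ p * r ^ (α - 1)) (g := h) (μ := volume)
      (((hca_int_rpow hα0).mono_set (Set.Ioc_subset_Ioc_right hδ1.le)).const_mul _)
      hIntA measurableSet_Ioc
      (fun r hr => by
        have h1 := hca_ptw_lower_piece (p := p) (c := c) (by linarith : (0:ℝ) ≤ p)
          hcm hcmc hδ0 hδ1 hr
        calc (1 - δ ^ cm) ^ p * r ^ (α - 1) = r ^ (α - 1) * (1 - δ ^ cm) ^ p :=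
              mul_comm _ _
          _ ≤ r ^ (α - 1) * ((1 - r ^ c) ^ p / (1 - r ^ 2)) :=
              mul_le_mul_of_nonneg_left h1 (hrpow_nonneg r hr.1)
          _ = h r := (mul_div_assoc _ _ _).symm)
    rwa [MeasureTheory.integral_const_mul, hca_eval_Ioc hα0 hδ0] at hmono
  have hA_upper : (∫ r in Set.Ioc (0:ℝ) δ, h r) ≤ (1 - δ ^ 2)⁻¹ * (δ ^ α / α) := by
    have hmono := setIntegral_mono_on
      (f := h) (g := fun r : ℝ => (1 - δ ^ 2)⁻¹ * r ^ (α - 1)) (μ := volume)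
      hIntA
      (((hca_int_rpow hα0).mono_set (Set.Ioc_subset_Ioc_right hδ1.le)).const_mul _)
      measurableSet_Ioc
      (fun r hr => by
        have h1 := hca_ptw_upper_piece (p := p) (c := c) (by linarith : (0:ℝ) ≤ p)
          hc.le hδ1 hr
        calc h r = r ^ (α - 1) * ((1 - r ^ c) ^ p / (1 - r ^ 2)) := mul_div_assoc _ _ _
          _ ≤ r ^ (α - 1) * (1 - δ ^ 2)⁻¹ :=
              mul_le_mul_of_nonneg_left h1 (hrpow_nonneg r hr.1)
          _ = (1 - δ ^ 2)⁻¹ * r ^ (α - 1) := mul_comm _ _)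
    rwa [MeasureTheory.integral_const_mul, hca_eval_Ioc hα0 hδ0] at hmono
  have hB_lower : (0:ℝ) ≤ ∫ r in Set.Ioo δ (1:ℝ), h r :=
    setIntegral_nonneg measurableSet_Ioo
      (fun r hr => hca_nonneg (by linarith : (0:ℝ) ≤ p) hc.le (lt_trans hδ0 hr.1) hr.2)
  have hB_upper : (∫ r in Set.Ioo δ (1:ℝ), h r) ≤ M ^ p * ((1 - δ ^ α) / α) := by
    have hmono := setIntegral_mono_on
      (f := h) (g := fun r : ℝ => M ^ p * r ^ (α - 1)) (μ := volume)
      hIntB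
      (((hca_int_rpow hα0).mono_set
        (fun x hx => ⟨lt_trans hδ0 hx.1, hx.2.le⟩)).const_mul _)
      measurableSet_Ioo
      (fun r hr => by
        have hr0 : 0 < r := lt_trans hδ0 hr.1
        have h1 := hca_ptw_upper (p := p) (c := c) hp hc hM1 hcM hr0 hr.2
        calc h r = r ^ (α - 1) * ((1 - r ^ c) ^ p / (1 - r ^ 2)) := mul_div_assoc _ _ _
          _ ≤ r ^ (α - 1) * M ^ p := mul_le_mul_of_nonneg_left h1 (hrpow_nonneg r hr0)
          _ = M ^ p * r ^ (α - 1) := mul_comm _ _)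
    rwa [MeasureTheory.integral_const_mul, hca_eval_Ioo hα0 hδ0 hδ1.le] at hmono
  have hαne : α ≠ 0 := hα0.ne'
  have t : ∀ X y : ℝ, α * (X * (y / α)) = X * y := fun X y => by
    rw [mul_comm, mul_assoc, div_mul_cancel₀ _ hαne]
  constructor
  · rw [hsplit, ← t ((1 - δ ^ cm) ^ p) (δ ^ α)]
    apply mul_le_mul_of_nonneg_left _ hα0.le
    linarith
  · have e2 : (1 - δ ^ 2)⁻¹ * δ ^ α + M ^ p * (1 - δ ^ α)
        = α * ((1 - δ ^ 2)⁻¹ * (δ ^ α / α) + M ^ p * ((1 - δ ^ α) / α)) := by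
      rw [mul_add, t, t]
    rw [hsplit, e2]
    apply mul_le_mul_of_nonneg_left _ hα0.le
    linarith

/-- Asymptotics of the sharp constant in the weighted fractional Hardy inequality:
`lim_{α→0⁺} α ∫₀¹ r^{α-1}(1 - r^{(d-2α)/p})^p/(1-r²) dr = 1`, equivalently
`lim_{α→0⁺} α C(d,p,α) = 2|S^{d-1}|`, where `|S^{d-1}| = 2π^{d/2}/Γ(d/2)`. -/
theorem hardy_constant_asymptotics
    (d p : ℝ) (hd : 1 ≤ d) (hp : 1 ≤ p) :
    Filter.Tendsto
      (fun α : ℝ => α *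
        ∫ r in Set.Ioo (0 : ℝ) 1,
          r ^ (α - 1) * (1 - r ^ ((d - 2 * α) / p)) ^ p / (1 - r ^ 2))
      (nhdsWithin 0 (Set.Ioi 0)) (nhds 1)
    ∧
    Filter.Tendsto
      (fun α : ℝ => α *
        (2 * (2 * Real.pi ^ (d / 2) / Real.Gamma (d / 2)) *
          ∫ r in Set.Ioo (0 : ℝ) 1,
            r ^ (α - 1) * (1 - r ^ ((d - 2 * α) / p)) ^ p / (1 - r ^ 2)))
      (nhdsWithin 0 (Set.Ioi 0))
      (nhds (2 * (2 * Real.pi ^ (d / 2) / Real.Gamma (d / 2)))) := by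
  have hp0 : (0:ℝ) < p := by linarith
  set cm : ℝ := d / (2 * p) with hcm_def
  have hcm : 0 < cm := div_pos (by linarith) (by linarith)
  suffices H : Filter.Tendsto
      (fun α : ℝ => α *
        ∫ r in Set.Ioo (0 : ℝ) 1,
          r ^ (α - 1) * (1 - r ^ ((d - 2 * α) / p)) ^ p / (1 - r ^ 2))
      (nhdsWithin 0 (Set.Ioi 0)) (nhds 1) by
    refine ⟨H, ?_⟩
    have H2 := H.const_mul (2 * (2 * Real.pi ^ (d / 2) / Real.Gamma (d / 2)))
    rw [mul_one] at H2
    exact H2.congr (fun α => by ring)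
  rw [Metric.tendsto_nhds]
  intro ε hε
  -- choose δ
  have T1 : Tendsto (fun δ : ℝ => (1 - δ ^ cm) ^ p) (nhdsWithin 0 (Set.Ioi 0)) (nhds 1) := by
    have s1 : Tendsto (fun δ : ℝ => δ ^ cm) (nhds 0) (nhds 0) := by
      have := (Real.continuousAt_rpow_const 0 cm (Or.inr hcm.le)).tendsto
      simpa [Real.zero_rpow hcm.ne'] using this
    have s2 : Tendsto (fun δ : ℝ => 1 - δ ^ cm) (nhds 0) (nhds 1) := by
      simpa using tendsto_const_nhds.sub s1
    have s3 := (Real.continuousAt_rpow_const 1 p (Or.inl one_ne_zero)).tendsto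
    have s4 := s3.comp s2
    simp only [Function.comp_def, Real.one_rpow] at s4
    exact s4.mono_left nhdsWithin_le_nhds
  have T2 : Tendsto (fun δ : ℝ => (1 - δ ^ 2)⁻¹) (nhdsWithin 0 (Set.Ioi 0)) (nhds 1) := by
    have hc : ContinuousAt (fun δ : ℝ => (1 - δ ^ 2)⁻¹) 0 := by
      apply ContinuousAt.inv₀ (by fun_prop)
      norm_num
    have := hc.tendsto
    norm_num at this
    exact this.mono_left nhdsWithin_le_nhds
  have hev := ((T1.eventually (eventually_gt_nhds (by linarith : 1 - ε/4 < 1))).and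
      ((T2.eventually (eventually_lt_nhds (by linarith : (1:ℝ) < 1 + ε/4))).and
        (eventually_mem_nhdsWithin.and
          ((eventually_lt_nhds one_pos).filter_mono nhdsWithin_le_nhds)))).exists
  obtain ⟨δ, hδL, hδU, hδ0, hδ1⟩ := hev
  rw [Set.mem_Ioi] at hδ0
  -- limits in α for fixed δ
  have Tδ : Tendsto (fun α : ℝ => δ ^ α) (nhdsWithin 0 (Set.Ioi 0)) (nhds 1) := by
    have h0 : ContinuousAt (fun α : ℝ => δ ^ α) (0:ℝ) :=
      Real.continuousAt_const_rpow (ne_of_gt hδ0)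
    have := h0.tendsto
    simp only [Real.rpow_zero] at this
    exact this.mono_left nhdsWithin_le_nhds
  set L : ℝ := (1 - δ ^ cm) ^ p
  set U : ℝ := (1 - δ ^ 2)⁻¹
  set K : ℝ := (max 1 (d / p)) ^ p
  have ev1 : ∀ᶠ α : ℝ in nhdsWithin 0 (Set.Ioi 0), 1 - ε/2 < L * δ ^ α := by
    have tL : Tendsto (fun α : ℝ => L * δ ^ α) (nhdsWithin 0 (Set.Ioi 0)) (nhds L) := by
      simpa using Tδ.const_mul L
    exact tL.eventually (eventually_gt_nhds (show 1 - ε/2 < L by linarith))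
  have ev2 : ∀ᶠ α : ℝ in nhdsWithin 0 (Set.Ioi 0), U * δ ^ α + K * (1 - δ ^ α) < 1 + ε/2 := by
    have tU : Tendsto (fun α : ℝ => U * δ ^ α + K * (1 - δ ^ α))
        (nhdsWithin 0 (Set.Ioi 0)) (nhds U) := by
      have t1 : Tendsto (fun α : ℝ => U * δ ^ α) (nhdsWithin 0 (Set.Ioi 0))
          (nhds (U * 1)) := Tδ.const_mul U
      have t2 : Tendsto (fun α : ℝ => (1:ℝ) - δ ^ α) (nhdsWithin 0 (Set.Ioi 0))
          (nhds (1 - 1)) := Tendsto.sub tendsto_const_nhds Tδ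
      have t3 : Tendsto (fun α : ℝ => K * (1 - δ ^ α)) (nhdsWithin 0 (Set.Ioi 0))
          (nhds (K * (1 - 1))) := t2.const_mul K
      simpa using t1.add t3
    exact tU.eventually (eventually_lt_nhds (show U < 1 + ε/2 by linarith))
  have ev3 : ∀ᶠ α in nhdsWithin 0 (Set.Ioi 0), α ∈ Set.Ioi (0:ℝ) :=
    eventually_mem_nhdsWithin
  have ev4 : ∀ᶠ α in nhdsWithin 0 (Set.Ioi 0), α < d / 4 :=
    (eventually_lt_nhds (by linarith : (0:ℝ) < d / 4)).filter_mono nhdsWithin_le_nhds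
  filter_upwards [ev1, ev2, ev3, ev4] with α h1 h2 h3 h4
  obtain ⟨hlow, hup⟩ := hca_bounds hd hp hδ0 hδ1 (Set.mem_Ioi.mp h3) h4
  rw [Real.dist_eq, abs_lt]
  constructor <;> linarith
end

section
/- Let d ≥ 1 and R > 1. Then lim_{α→0⁺} α ∫_{{y ∈ ℝ^d : |y| > R}} (|y| − 1)^{−d} |y|^{−α} dy = |S^{d−1}|. -/
/-!
In polar coordinates the integral is `|S^{d-1}| ∫_R^∞ r^{d-1} (r-1)^{-d} r^{-α} dr`. The radial
weight `r^{d-1} (r-1)^{-d}` differs from `1/r` by `O(r^{-2})`, an integrable function, whose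
contribution is killed by the factor `α` as `α → 0⁺`; what remains is
`α ∫_R^∞ r^{-1-α} dr = R^{-α} → 1`.
-/

open MeasureTheory Metric Set Filter

/-- The surface measure of the unit sphere `S^{d-1}` in `ℝ^d`. -/
noncomputable def sphereMeasure (d : ℕ) : ℝ :=
  2 * Real.pi ^ ((d : ℝ) / 2) / Real.Gamma ((d : ℝ) / 2)

open Module Real Topology

theorem setIntegral_lt_norm_fun_norm_addHaar
    {E F : Type*} [NormedAddCommGroup E] [NormedSpace ℝ E] [Nontrivial E]
    [FiniteDimensional ℝ E] [MeasurableSpace E] [BorelSpace E] [NormedAddCommGroup F]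
    [NormedSpace ℝ F]
    (μ : Measure E) [μ.IsAddHaarMeasure] (f : ℝ → F) {R : ℝ} (hR : 0 ≤ R) :
    ∫ x in {x : E | R < ‖x‖}, f ‖x‖ ∂μ =
      μ.toSphere.real univ • ∫ r in Ioi R, r ^ (finrank ℝ E - 1) • f r := by
  have hs : MeasurableSet {x : E | R < ‖x‖} := measurableSet_lt measurable_const measurable_norm
  have hindicator : (fun r : ℝ ↦ r ^ (finrank ℝ E - 1) • (Ioi R).indicator f r) =
      (Ioi R).indicator fun r ↦ r ^ (finrank ℝ E - 1) • f r :=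
    funext fun r ↦ (indicator_smul_apply _ _ _ r).symm
  have := integral_fun_norm_addHaar μ ((Ioi R).indicator f)
  rw [← integral_indicator hs]
  rwa [hindicator, setIntegral_indicator measurableSet_Ioi, Ioi_inter_Ioi, max_eq_right hR,
    ← smul_assoc, nsmul_eq_mul, ← μ.toSphere_real_apply_univ] at this

theorem volume_toSphere_real_univ {d : ℕ} (hd : 1 ≤ d) :
    (volume : Measure (EuclideanSpace ℝ (Fin d))).toSphere.real univ = sphereMeasure d := by
  have : Nonempty (Fin d) := ⟨⟨0, hd⟩⟩
  have hd2 : 0 < (d : ℝ) / 2 := by positivity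
  rw [Measure.toSphere_real_apply_univ, finrank_euclideanSpace_fin, measureReal_def,
    EuclideanSpace.volume_ball, Fintype.card_fin, ENNReal.toReal_mul, ENNReal.toReal_pow,
    ENNReal.toReal_ofReal zero_le_one, one_pow, one_mul, ENNReal.toReal_ofReal (by positivity),
    Gamma_add_one hd2.ne', sqrt_eq_rpow, ← rpow_natCast, ← rpow_mul pi_pos.le, sphereMeasure]
  field_simp

theorem abs_pow_mul_sub_one_rpow_sub_inv_le {d : ℕ} (hd : 1 ≤ d) {R r : ℝ} (hR : 1 < R)
    (hr : R ≤ r) :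
    |r ^ (d - 1) * (r - 1) ^ (-(d : ℝ)) - r⁻¹| ≤ d * (R / (R - 1)) ^ d * r ^ (-2 : ℝ) := by
  obtain ⟨n, rfl⟩ := Nat.exists_eq_add_of_le' hd
  have hr0 : 0 < r := by linarith
  have hr1 : 0 < r - 1 := by linarith
  have hdiff : |r ^ (n + 1) - (r - 1) ^ (n + 1)| ≤ (n + 1) * r ^ n := by
    simpa [abs_of_pos hr0, abs_of_pos hr1] using abs_pow_sub_pow_le r (r - 1) (n + 1)
  have hratio : r / (r - 1) ≤ R / (R - 1) := by
    rw [div_le_div_iff₀ hr1 (by linarith)]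
    linarith
  have hsplit : r ^ n * (r - 1) ^ (-((n + 1 : ℕ) : ℝ)) - r⁻¹ =
      (r ^ (n + 1) - (r - 1) ^ (n + 1)) / (r - 1) ^ (n + 1) * r⁻¹ := by
    rw [rpow_neg hr1.le, rpow_natCast]
    field_simp
    ring
  rw [Nat.add_sub_cancel, hsplit, abs_mul, abs_div, abs_of_pos (pow_pos hr1 _),
    abs_of_pos (inv_pos.2 hr0)]
  calc |r ^ (n + 1) - (r - 1) ^ (n + 1)| / (r - 1) ^ (n + 1) * r⁻¹
      ≤ (n + 1) * r ^ n / (r - 1) ^ (n + 1) * r⁻¹ := by gcongr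
    _ = (n + 1) * (r / (r - 1)) ^ (n + 1) * r ^ (-2 : ℝ) := by
        rw [rpow_neg hr0.le, div_pow, show (2 : ℝ) = (2 : ℕ) by norm_num, rpow_natCast]
        field_simp
        ring
    _ ≤ (n + 1 : ℕ) * (R / (R - 1)) ^ (n + 1) * r ^ (-2 : ℝ) := by push_cast; gcongr

theorem ae_restrict_Ioi_norm_rpow_neg_le_one {R α : ℝ} (hR : 1 ≤ R) (hα : 0 ≤ α) :
    ∀ᵐ r ∂volume.restrict (Ioi R), ‖r ^ (-α)‖ ≤ 1 := by
  filter_upwards [ae_restrict_mem measurableSet_Ioi] with r (hr : R < r)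
  rw [norm_of_nonneg (rpow_nonneg (by linarith) _)]
  exact rpow_le_one_of_one_le_of_nonpos (by linarith) (neg_nonpos.2 hα)

theorem integrableOn_Ioi_mul_rpow_neg {g : ℝ → ℝ} {R α : ℝ} (hR : 1 ≤ R) (hα : 0 ≤ α)
    (hg : IntegrableOn g (Ioi R)) : IntegrableOn (fun r ↦ g r * r ^ (-α)) (Ioi R) :=
  hg.mul_bdd (by fun_prop) (ae_restrict_Ioi_norm_rpow_neg_le_one hR hα)

theorem tendsto_mul_setIntegral_Ioi_mul_rpow_neg_zero {g : ℝ → ℝ} {R : ℝ} (hR : 1 ≤ R)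
    (hg : IntegrableOn g (Ioi R)) :
    Tendsto (fun α ↦ α * ∫ r in Ioi R, g r * r ^ (-α)) (𝓝[>] 0) (𝓝 0) := by
  have hbound : ∀ α > 0,
      ‖α * ∫ r in Ioi R, g r * r ^ (-α)‖ ≤ α * ∫ r in Ioi R, ‖g r‖ := by
    intro α hα
    rw [norm_mul, norm_of_nonneg hα.le]
    gcongr
    refine norm_integral_le_of_norm_le hg.norm ?_
    filter_upwards [ae_restrict_Ioi_norm_rpow_neg_le_one hR hα.le] with r hr
    rw [norm_mul]
    exact mul_le_of_le_one_right (norm_nonneg _) hr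
  refine squeeze_zero_norm' (eventually_nhdsWithin_of_forall (s := Ioi 0) hbound) ?_
  simpa using ((tendsto_id (x := 𝓝 (0 : ℝ))).mul_const _).mono_left nhdsWithin_le_nhds

theorem mul_setIntegral_Ioi_rpow_neg_one_sub {R α : ℝ} (hR : 0 < R) (hα : 0 < α) :
    α * ∫ r in Ioi R, r ^ (-1 - α) = R ^ (-α) := by
  rw [integral_Ioi_rpow_of_lt (by linarith) hR, show -1 - α + 1 = -α by ring]
  field_simp

theorem tendsto_mul_setIntegral_Ioi_mul_rpow_neg {f : ℝ → ℝ} {R : ℝ} (hR : 1 ≤ R)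
    (hf : IntegrableOn (fun r ↦ f r - r⁻¹) (Ioi R)) :
    Tendsto (fun α ↦ α * ∫ r in Ioi R, f r * r ^ (-α)) (𝓝[>] 0) (𝓝 1) := by
  have hR0 : 0 < R := by linarith
  have hsplit : ∀ α > 0, α * ∫ r in Ioi R, f r * r ^ (-α) =
      α * (∫ r in Ioi R, (f r - r⁻¹) * r ^ (-α)) + R ^ (-α) := by
    intro α hα
    rw [← mul_setIntegral_Ioi_rpow_neg_one_sub hR0 hα, ← mul_add, ← integral_add
      (integrableOn_Ioi_mul_rpow_neg hR hα.le hf) (integrableOn_Ioi_rpow_of_lt (by linarith) hR0)]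
    congr 1
    refine setIntegral_congr_fun measurableSet_Ioi fun r (hr : R < r) ↦ ?_
    rw [sub_eq_add_neg (-1), rpow_add (by linarith), rpow_neg_one]
    ring
  have hpow : Tendsto (fun α : ℝ ↦ R ^ (-α)) (𝓝[>] 0) (𝓝 1) := by
    simpa [Function.comp_def] using
      (((continuous_const_rpow hR0.ne').comp continuous_neg).tendsto 0).mono_left
        nhdsWithin_le_nhds
  simpa using ((tendsto_mul_setIntegral_Ioi_mul_rpow_neg_zero hR hf).add hpow).congr'
    (eventually_nhdsWithin_of_forall (s := Ioi 0) fun α hα ↦ (hsplit α hα).symm)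

theorem integrableOn_Ioi_pow_mul_sub_one_rpow_sub_inv {d : ℕ} (hd : 1 ≤ d) {R : ℝ}
    (hR : 1 < R) :
    IntegrableOn (fun r : ℝ ↦ r ^ (d - 1) * (r - 1) ^ (-(d : ℝ)) - r⁻¹) (Ioi R) := by
  refine ((integrableOn_Ioi_rpow_of_lt (by norm_num : (-2 : ℝ) < -1) (by linarith)).const_mul
    (d * (R / (R - 1)) ^ d)).mono' (by fun_prop) ?_
  filter_upwards [ae_restrict_mem measurableSet_Ioi] with r (hr : R < r)
  exact abs_pow_mul_sub_one_rpow_sub_inv_le hd hR hr.le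

/-- `lim_{α→0⁺} α ∫_{|y|>R} (|y|-1)^{-d} |y|^{-α} dy = |S^{d-1}|` for `R > 1`. -/
theorem tail_integral_asymptotics
    (d : ℕ) (hd : 1 ≤ d) (R : ℝ) (hR : 1 < R) :
    Filter.Tendsto
      (fun α : ℝ => α *
        ∫ y in {y : EuclideanSpace ℝ (Fin d) | R < ‖y‖},
          (‖y‖ - 1) ^ (-(d : ℝ)) * ‖y‖ ^ (-α))
      (nhdsWithin 0 (Set.Ioi 0)) (nhds (sphereMeasure d)) := by
  have : Nonempty (Fin d) := ⟨⟨0, hd⟩⟩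
  have hpolar (α : ℝ) : ∫ y in {y : EuclideanSpace ℝ (Fin d) | R < ‖y‖},
      (‖y‖ - 1) ^ (-(d : ℝ)) * ‖y‖ ^ (-α) =
        sphereMeasure d * ∫ r in Ioi R, r ^ (d - 1) * (r - 1) ^ (-(d : ℝ)) * r ^ (-α) := by
    rw [setIntegral_lt_norm_fun_norm_addHaar volume (fun r ↦ (r - 1) ^ (-(d : ℝ)) * r ^ (-α))
      (by linarith), volume_toSphere_real_univ hd, finrank_euclideanSpace_fin]
    simp only [smul_eq_mul, mul_assoc]
  simp_rw [hpolar, mul_left_comm _ (sphereMeasure d)]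
  simpa using (tendsto_mul_setIntegral_Ioi_mul_rpow_neg hR.le
    (integrableOn_Ioi_pow_mul_sub_one_rpow_sub_inv hd hR)).const_mul (sphereMeasure d)
end

section
/- Let d ≥ 1, p ≥ 1, 0 < α < d, and let f : ℝ^d → ℝ be measurable. Then ∫_{ℝ^d} ∫_{{x ∈ ℝ^d : |y| ≥ 2|x|}} |f(y)|^p |x−y|^{−d} |x|^{−α} |y|^{−α} dx dy ≤ (2^{2d−α} |S^{d−1}| / (d − α)) ∫_{ℝ^d} |f(y)|^p |y|^{−2α} dy (as an inequality in [0, ∞]). -/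
open MeasureTheory Metric Set Filter

/-!
For `|y| ≥ 2|x|` we have `|x - y| ≥ |y|/2`, so the inner integral is at most
`2^d |y|^{-d-α} |f(y)|^p` times the integral of `|x|^{-α}` over the ball of radius `|y|/2`.
In polar coordinates the latter is `|S^{d-1}| (|y|/2)^{d-α} / (d-α)`, finite because `α < d`,
and the powers of `|y|` combine to `|y|^{-2α}`. This gives the sharper constant
`2^α |S^{d-1}| / (d-α)`.
-/

open scoped ENNReal

local notation "dim" => Module.finrank ℝ

lemma setLIntegral_Ioc_zero_rpow {s : ℝ} (hs : -1 < s) {R : ℝ} (hR : 0 ≤ R) :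
    ∫⁻ r in Ioc 0 R, ENNReal.ofReal (r ^ s) = ENNReal.ofReal (R ^ (s + 1) / (s + 1)) := by
  have hint : IntegrableOn (fun r : ℝ => r ^ s) (Ioc 0 R) :=
    (intervalIntegrable_iff_integrableOn_Ioc_of_le hR).mp
      (intervalIntegral.intervalIntegrable_rpow' hs)
  have hnonneg : 0 ≤ᵐ[volume.restrict (Ioc (0 : ℝ) R)] fun r : ℝ => r ^ s := by
    filter_upwards [ae_restrict_mem measurableSet_Ioc] with r hr
    exact Real.rpow_nonneg hr.1.le _
  rw [← ofReal_integral_eq_lintegral_ofReal hint hnonneg, ← intervalIntegral.integral_of_le hR,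
    integral_rpow (Or.inl hs), Real.zero_rpow (by linarith), sub_zero]

lemma half_norm_le_norm_sub_of_two_mul_norm_le {E : Type*} [SeminormedAddCommGroup E] {x y : E}
    (h : 2 * ‖x‖ ≤ ‖y‖) : ‖y‖ / 2 ≤ ‖x - y‖ := by
  have := norm_sub_norm_le y x
  rw [norm_sub_rev] at this
  linarith

section Haar

variable {E : Type*} [NormedAddCommGroup E] [NormedSpace ℝ E] [MeasurableSpace E]
  [Nontrivial E] [FiniteDimensional ℝ E] [BorelSpace E] (μ : Measure E) [μ.IsAddHaarMeasure]

lemma lintegral_fun_norm_addHaar {g : ℝ → ℝ≥0∞} (hg : Measurable g) :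
    ∫⁻ x, g ‖x‖ ∂μ =
      dim E * μ (ball 0 1) * ∫⁻ r in Ioi (0 : ℝ), ENNReal.ofReal (r ^ (dim E - 1)) * g r := by
  have hmeas : Measurable fun p : sphere (0 : E) 1 × Ioi (0 : ℝ) => g p.2 :=
    hg.comp (measurable_subtype_coe.comp measurable_snd)
  calc
    ∫⁻ x, g ‖x‖ ∂μ = ∫⁻ x : ({(0)}ᶜ : Set E), g ‖x.1‖ ∂(μ.comap (↑)) := by
      rw [lintegral_subtype_comap (measurableSet_singleton _).compl fun x ↦ g ‖x‖,
        restrict_compl_singleton]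
    _ = ∫⁻ x : sphere (0 : E) 1 × Ioi (0 : ℝ), g x.2
          ∂μ.toSphere.prod (.volumeIoiPow (dim E - 1)) := by
      rw [← μ.measurePreserving_homeomorphUnitSphereProd.lintegral_comp hmeas]; simp
    _ = μ.toSphere univ * ∫⁻ r : Ioi (0 : ℝ), g r ∂(.volumeIoiPow (dim E - 1)) := by
      rw [lintegral_prod _ hmeas.aemeasurable]
      simp [lintegral_const, mul_comm]
    _ = _ := by
      rw [Measure.toSphere_apply_univ, Measure.volumeIoiPow,
        lintegral_withDensity_eq_lintegral_mul _
          (measurable_subtype_coe.pow_const _).ennreal_ofReal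
          (show Measurable fun r : Ioi (0 : ℝ) => g r from hg.comp measurable_subtype_coe),
        Pi.mul_def, lintegral_subtype_comap measurableSet_Ioi
        fun r ↦ ENNReal.ofReal (r ^ (dim E - 1)) * g r]

variable {μ} in
lemma setLIntegral_closedBall_norm_rpow_neg {α : ℝ} (hα : α < dim E) {R : ℝ} (hR : 0 ≤ R) :
    ∫⁻ x in closedBall (0 : E) R, ENNReal.ofReal (‖x‖ ^ (-α)) ∂μ =
      dim E * μ (ball 0 1) * ENNReal.ofReal (R ^ ((dim E : ℝ) - α) / ((dim E : ℝ) - α)) := by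
  set g : ℝ → ℝ≥0∞ := (Iic R).indicator fun r => ENNReal.ofReal (r ^ (-α))
  have hg : Measurable g := Measurable.indicator (by fun_prop) measurableSet_Iic
  have hpow : ∀ r ∈ Ioc 0 R, ENNReal.ofReal (r ^ (dim E - 1)) * ENNReal.ofReal (r ^ (-α)) =
      ENNReal.ofReal (r ^ ((dim E : ℝ) - α - 1)) := fun r hr => by
    rw [← ENNReal.ofReal_mul (pow_nonneg hr.1.le _), ← Real.rpow_natCast,
      Nat.cast_sub Module.finrank_pos, ← Real.rpow_add hr.1]
    ring_nf
  calc
    _ = ∫⁻ x, g ‖x‖ ∂μ := by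
      rw [← lintegral_indicator measurableSet_closedBall]
      congr with x
      by_cases hx : ‖x‖ ≤ R <;> simp [g, indicator, hx]
    _ = dim E * μ (ball 0 1) * ∫⁻ r in Ioc 0 R, ENNReal.ofReal (r ^ ((dim E : ℝ) - α - 1)) := by
      have hind : (fun r => ENNReal.ofReal (r ^ (dim E - 1)) * g r) = (Iic R).indicator
          fun r => ENNReal.ofReal (r ^ (dim E - 1)) * ENNReal.ofReal (r ^ (-α)) := by
        ext r
        by_cases hr : r ∈ Iic R <;> simp [g, hr]
      rw [lintegral_fun_norm_addHaar μ hg, hind, lintegral_indicator measurableSet_Iic,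
        Measure.restrict_restrict measurableSet_Iic, inter_comm, Ioi_inter_Iic]
      exact congrArg _ (setLIntegral_congr_fun measurableSet_Ioc hpow)
    _ = _ := by
      rw [setLIntegral_Ioc_zero_rpow (by linarith) hR, sub_add_cancel]

lemma setLIntegral_offdiagonal_kernel_le {α : ℝ} (hα : α ≠ 0) (hα' : α < dim E)
    {A : ℝ} (hA : 0 ≤ A) (y : E) :
    ∫⁻ x in {x | 2 * ‖x‖ ≤ ‖y‖},
        ENNReal.ofReal (A / ‖x - y‖ ^ (dim E : ℝ) * ‖x‖ ^ (-α) * ‖y‖ ^ (-α)) ∂μ ≤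
      dim E * μ (ball 0 1) * ENNReal.ofReal (2 ^ α / ((dim E : ℝ) - α)) *
        ENNReal.ofReal (A * ‖y‖ ^ (-(2 * α))) := by
  rcases (norm_nonneg y).eq_or_lt with hy | hy
  · simp [← hy, Real.zero_rpow (neg_ne_zero.mpr hα)]
  set n : ℝ := (dim E : ℝ)
  set K := A / (‖y‖ / 2) ^ n * ‖y‖ ^ (-α)
  have hK : 0 ≤ K := by positivity
  have hkernel : ∀ x ∈ {x : E | 2 * ‖x‖ ≤ ‖y‖},
      ENNReal.ofReal (A / ‖x - y‖ ^ n * ‖x‖ ^ (-α) * ‖y‖ ^ (-α)) ≤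
        ENNReal.ofReal K * ENNReal.ofReal (‖x‖ ^ (-α)) := fun x hx => by
    rw [← ENNReal.ofReal_mul hK]
    refine ENNReal.ofReal_le_ofReal ?_
    have hxy := half_norm_le_norm_sub_of_two_mul_norm_le hx
    calc A / ‖x - y‖ ^ n * ‖x‖ ^ (-α) * ‖y‖ ^ (-α)
        ≤ A / (‖y‖ / 2) ^ n * ‖x‖ ^ (-α) * ‖y‖ ^ (-α) := by gcongr
      _ = K * ‖x‖ ^ (-α) := by ring
  have hpowers :
      K * ((‖y‖ / 2) ^ (n - α) / (n - α)) = 2 ^ α / (n - α) * (A * ‖y‖ ^ (-(2 * α))) := by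
    have h2 : (0 : ℝ) < ‖y‖ / 2 := by positivity
    have h2α : ‖y‖ ^ (-(2 * α)) = (‖y‖ ^ α)⁻¹ ^ 2 := by
      rw [← Real.rpow_neg hy.le, ← Real.rpow_natCast, ← Real.rpow_mul hy.le]
      ring_nf
    simp only [K]
    rw [h2α, Real.rpow_neg hy.le, Real.rpow_sub h2, Real.div_rpow hy.le zero_le_two α]
    have : (0 : ℝ) < ‖y‖ ^ α := by positivity
    have : (0 : ℝ) < (‖y‖ / 2) ^ n := by positivity
    have : n - α ≠ 0 := by linarith
    field_simp
  calc
    _ ≤ ∫⁻ x in {x | 2 * ‖x‖ ≤ ‖y‖}, ENNReal.ofReal K * ENNReal.ofReal (‖x‖ ^ (-α)) ∂μ :=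
      setLIntegral_mono' (measurableSet_le (by fun_prop) measurable_const) hkernel
    _ = ENNReal.ofReal K * ∫⁻ x in {x | 2 * ‖x‖ ≤ ‖y‖}, ENNReal.ofReal (‖x‖ ^ (-α)) ∂μ :=
      lintegral_const_mul' _ _ ENNReal.ofReal_ne_top
    _ ≤ ENNReal.ofReal K * ∫⁻ x in closedBall 0 (‖y‖ / 2), ENNReal.ofReal (‖x‖ ^ (-α)) ∂μ := by
      refine mul_le_mul_right (lintegral_mono_set fun x (hx : 2 * ‖x‖ ≤ ‖y‖) => ?_) _
      rw [mem_closedBall_zero_iff]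
      linarith
    _ = _ := by
      rw [setLIntegral_closedBall_norm_rpow_neg hα' (by positivity), mul_left_comm,
        ← ENNReal.ofReal_mul hK, hpowers, ENNReal.ofReal_mul (by positivity)]
      ring

end Haar

lemma natCast_mul_volume_ball_eq_sphereMeasure (d : ℕ) :
    (d : ℝ≥0∞) * volume (ball (0 : EuclideanSpace ℝ (Fin d)) 1) =
      ENNReal.ofReal (sphereMeasure d) := by
  rcases d.eq_zero_or_pos with rfl | hd
  · simp [sphereMeasure]
  have : Nonempty (Fin d) := ⟨⟨0, hd⟩⟩
  have hd2 : (0 : ℝ) < d / 2 := by positivity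
  have hsqrt : Real.sqrt Real.pi ^ d = Real.pi ^ ((d : ℝ) / 2) := by
    rw [Real.sqrt_eq_rpow, ← Real.rpow_natCast, ← Real.rpow_mul Real.pi_pos.le]
    ring_nf
  rw [EuclideanSpace.volume_ball, Fintype.card_fin, ENNReal.ofReal_one, one_pow, one_mul,
    ← ENNReal.ofReal_natCast, ← ENNReal.ofReal_mul (by positivity), hsqrt,
    Real.Gamma_add_one hd2.ne', sphereMeasure]
  congr 1
  have := Real.Gamma_pos_of_pos hd2
  field_simp

lemma sphereMeasure_nonneg (d : ℕ) : 0 ≤ sphereMeasure d := by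
  unfold sphereMeasure
  positivity

theorem weighted_offdiagonal_bound_general
    (d : ℕ) (p : ℝ) (α : ℝ) (hα : 0 < α) (hα' : α < d)
    (f : EuclideanSpace ℝ (Fin d) → ℝ) :
    (∫⁻ y : EuclideanSpace ℝ (Fin d),
      ∫⁻ x in {x : EuclideanSpace ℝ (Fin d) | 2 * ‖x‖ ≤ ‖y‖},
        ENNReal.ofReal
          (|f y| ^ p / ‖x - y‖ ^ (d : ℝ) * ‖x‖ ^ (-α) * ‖y‖ ^ (-α)))
    ≤ ENNReal.ofReal ((2 : ℝ) ^ (2 * (d : ℝ) - α) * sphereMeasure d / ((d : ℝ) - α)) *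
        ∫⁻ y : EuclideanSpace ℝ (Fin d),
          ENNReal.ofReal (|f y| ^ p * ‖y‖ ^ (-(2 * α))) := by
  have : Nonempty (Fin d) := ⟨⟨0, by exact_mod_cast hα.trans hα'⟩⟩
  have hdim : Module.finrank ℝ (EuclideanSpace ℝ (Fin d)) = d := finrank_euclideanSpace_fin
  have hinner (y : EuclideanSpace ℝ (Fin d)) := setLIntegral_offdiagonal_kernel_le volume hα.ne'
    (by rwa [hdim]) (Real.rpow_nonneg (abs_nonneg (f y)) p) y
  simp only [hdim, natCast_mul_volume_ball_eq_sphereMeasure] at hinner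
  have hconst : ENNReal.ofReal (sphereMeasure d) * ENNReal.ofReal (2 ^ α / ((d : ℝ) - α)) ≤
      ENNReal.ofReal ((2 : ℝ) ^ (2 * (d : ℝ) - α) * sphereMeasure d / ((d : ℝ) - α)) := by
    rw [← ENNReal.ofReal_mul (sphereMeasure_nonneg d)]
    refine ENNReal.ofReal_le_ofReal ?_
    rw [mul_div_assoc', mul_comm (2 ^ _)]
    have := sphereMeasure_nonneg d
    gcongr
    · norm_num
    · linarith
  calc
    _ ≤ _ := lintegral_mono hinner
    _ = _ := lintegral_const_mul' _ _ (by finiteness)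
    _ ≤ _ := by gcongr

/-- The off-diagonal weighted integral `I₂` bound:
`∫_{ℝ^d} ∫_{|y| ≥ 2|x|} |f(y)|^p |x-y|^{-d} |x|^{-α} |y|^{-α} dx dy
  ≤ (2^{2d-α}|S^{d-1}|/(d-α)) ∫ |f(y)|^p |y|^{-2α} dy`. -/
theorem weighted_offdiagonal_bound
    (d : ℕ) (hd : 1 ≤ d) (p : ℝ) (hp : 1 ≤ p) (α : ℝ) (hα : 0 < α) (hα' : α < d)
    (f : EuclideanSpace ℝ (Fin d) → ℝ) (hf : Measurable f) :
    (∫⁻ y : EuclideanSpace ℝ (Fin d),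
      ∫⁻ x in {x : EuclideanSpace ℝ (Fin d) | 2 * ‖x‖ ≤ ‖y‖},
        ENNReal.ofReal
          (|f y| ^ p / ‖x - y‖ ^ (d : ℝ) * ‖x‖ ^ (-α) * ‖y‖ ^ (-α)))
    ≤ ENNReal.ofReal ((2 : ℝ) ^ (2 * (d : ℝ) - α) * sphereMeasure d / ((d : ℝ) - α)) *
        ∫⁻ y : EuclideanSpace ℝ (Fin d),
          ENNReal.ofReal (|f y| ^ p * ‖y‖ ^ (-(2 * α))) :=
  weighted_offdiagonal_bound_general d p α hα hα' f
end
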